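/- arXiv:1203.4767 — 3 statements merged into one kernel-verified Lean document; each statement's English description precedes it below -/
import Mathlib

section
/- Let 𝔨 be a finite-dimensional real Lie algebra with an invariant inner product, and let h : 𝔨 → ℝ be a C², infinitesimally Ad-invariant function, with gradient grad h and Hessian H(Y) (the derivative of grad h at Y). Then for all Y, V ∈ 𝔨 one has ⁅Y, H(Y)V⁆ = ⁅grad h(Y), V⁆; that is, ad_{u(Y)} = ad_Y ∘ H(Y) where u(Y) = grad h(Y). -/
/-!
Differentiating the identity `⟪∇h y, ⁅X, y⁆⟫ = 0` at `Y` in the direction `V` gives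
`⟪H(Y)V, ⁅X, Y⁆⟫ + ⟪∇h Y, ⁅X, V⁆⟫ = 0`. Since invariance and antisymmetry make `⟪⁅A, B⁆, C⟫`
cyclic, the two terms are `⟪⁅Y, H(Y)V⁆, X⟫` and `-⟪⁅∇h Y, V⁆, X⟫`, for every `X`.
-/

open RealInnerProductSpace

theorem ContDiff.gradient {F : Type*} [NormedAddCommGroup F] [InnerProductSpace ℝ F]
    [CompleteSpace F] {f : F → ℝ} {n : WithTop ℕ∞} (hf : ContDiff ℝ (n + 1) f) :
    ContDiff ℝ n (gradient f) :=
  (InnerProductSpace.toDual ℝ F).symm.contDiff.comp (hf.fderiv_right le_rfl)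

theorem HasFDerivAt.inner_add_inner_eq_zero_of_forall_inner_eq_zero {E F : Type*}
    [NormedAddCommGroup E] [NormedSpace ℝ E] [NormedAddCommGroup F] [InnerProductSpace ℝ F]
    {f g : E → F} {f' g' : E →L[ℝ] F} {y : E} (hf : HasFDerivAt f f' y)
    (hg : HasFDerivAt g g' y) (horth : ∀ x, ⟪f x, g x⟫ = 0) (v : E) :
    ⟪f y, g' v⟫ + ⟪f' v, g y⟫ = 0 := by
  have hzero : HasFDerivAt (fun x => ⟪f x, g x⟫) (0 : E →L[ℝ] ℝ) y := by
    simpa only [horth] using hasFDerivAt_const (0 : ℝ) y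
  simpa using congr($((hf.inner ℝ hg).unique hzero) v)

theorem inner_bracket_cyclic {E : Type*} [NormedAddCommGroup E] [InnerProductSpace ℝ E]
    (l : E →ₗ[ℝ] E →ₗ[ℝ] E) (hanti : ∀ X Y : E, l X Y = -l Y X)
    (hinv : ∀ X Y Z : E, ⟪l X Y, Z⟫ + ⟪Y, l X Z⟫ = 0) (X Y Z : E) :
    ⟪l X Y, Z⟫ = ⟪l Z X, Y⟫ := by
  rw [hanti Z X, inner_neg_left]
  linarith [hinv X Y Z, real_inner_comm Y (l X Z)]

theorem bracket_hessian_eq_bracket_gradient_of_adInvariant_general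
    {E : Type*} [NormedAddCommGroup E] [InnerProductSpace ℝ E] [FiniteDimensional ℝ E]
    (l : E →ₗ[ℝ] E →ₗ[ℝ] E)
    (hanti : ∀ X Y : E, l X Y = -l Y X)
    (hinv : ∀ X Y Z : E, ⟪l X Y, Z⟫ + ⟪Y, l X Z⟫ = 0)
    (h : E → ℝ) (hh : ContDiff ℝ 2 h)
    (hAd : ∀ X Y : E, ⟪gradient h Y, l X Y⟫ = 0) :
    ∀ Y V : E, l Y (fderiv ℝ (gradient h) Y V) = l (gradient h Y) V := by
  intro Y V
  have hcyc := inner_bracket_cyclic l hanti hinv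
  have hdiff : DifferentiableAt ℝ (gradient h) Y :=
    (ContDiff.gradient (n := 1) hh).differentiable one_ne_zero Y
  refine ext_inner_right ℝ fun X => ?_
  have hderiv := hdiff.hasFDerivAt.inner_add_inner_eq_zero_of_forall_inner_eq_zero
    (l X).toContinuousLinearMap.hasFDerivAt (hAd X) V
  simp only [LinearMap.coe_toContinuousLinearMap'] at hderiv
  calc ⟪l Y (fderiv ℝ (gradient h) Y V), X⟫
      = ⟪fderiv ℝ (gradient h) Y V, l X Y⟫ := by rw [hcyc, real_inner_comm]
    _ = -⟪l X V, gradient h Y⟫ := by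
      linarith [real_inner_comm (gradient h Y) (l X V)]
    _ = ⟪l (gradient h Y) V, X⟫ := by
      rw [hcyc X V, hcyc (gradient h Y) V X, hanti X, inner_neg_left]

/-- **`ad_{u(Y)} = ad_Y ∘ H(Y)` for an Ad-invariant complexifier.**
Let `𝔨` be a finite-dimensional real Lie algebra (with bilinear antisymmetric bracket `l`
satisfying the Jacobi identity) carrying an invariant inner product, and let `h : 𝔨 → ℝ`
be a `C²`, infinitesimally Ad-invariant function with gradient `grad h` and Hessian
`H(Y) = D(grad h)(Y)`. Then `⁅Y, H(Y)V⁆ = ⁅grad h(Y), V⁆` for all `Y, V`. -/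
theorem bracket_hessian_eq_bracket_gradient_of_adInvariant
    {E : Type*} [NormedAddCommGroup E] [InnerProductSpace ℝ E] [FiniteDimensional ℝ E]
    (l : E →ₗ[ℝ] E →ₗ[ℝ] E)
    (hanti : ∀ X Y : E, l X Y = -l Y X)
    (hjacobi : ∀ X Y Z : E, l X (l Y Z) = l (l X Y) Z + l Y (l X Z))
    (hinv : ∀ X Y Z : E, ⟪l X Y, Z⟫ + ⟪Y, l X Z⟫ = 0)
    (h : E → ℝ) (hh : ContDiff ℝ 2 h)
    (hAd : ∀ X Y : E, ⟪gradient h Y, l X Y⟫ = 0) :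
    ∀ Y V : E, l Y (fderiv ℝ (gradient h) Y V) = l (gradient h Y) V :=
  bracket_hessian_eq_bracket_gradient_of_adInvariant_general l hanti hinv h hh hAd
end

section
/- Let 𝔨 be a finite-dimensional real Lie algebra with an invariant inner product, and let h : 𝔨 → ℝ be a C², infinitesimally Ad-invariant function, with gradient grad h and Hessian H(Y). Then for all X, Y ∈ 𝔨 one has H(Y)(⁅X,Y⁆) = ⁅X, grad h(Y)⁆; that is, ad_{u(Y)} = H(Y) ∘ ad_Y where u(Y) = grad h(Y). -/
/-!
Differentiating `⟪∇h(Y), ⁅X, Y⁆⟫ = 0` in the direction `Z` gives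
`⟪H(Y) Z, ⁅X, Y⁆⟫ = -⟪∇h(Y), ⁅X, Z⁆⟫`, which is `⟪⁅X, ∇h(Y)⁆, Z⟫` by invariance of the inner
product. By symmetry of the Hessian the left side is `⟪H(Y) ⁅X, Y⁆, Z⟫`, and `Z` is arbitrary.
-/

open RealInnerProductSpace InnerProductSpace

section Gradient

variable {E : Type*} [NormedAddCommGroup E] [InnerProductSpace ℝ E] [CompleteSpace E]
  {h : E → ℝ} {Y : E}

theorem hasFDerivAt_gradient (hh : DifferentiableAt ℝ (fderiv ℝ h) Y) :
    HasFDerivAt (gradient h)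
      ((toDual ℝ E).symm.toContinuousLinearEquiv.toContinuousLinearMap.comp
        (fderiv ℝ (fderiv ℝ h) Y)) Y :=
  (toDual ℝ E).symm.toContinuousLinearEquiv.toContinuousLinearMap.hasFDerivAt.comp Y
    hh.hasFDerivAt

theorem inner_fderiv_gradient_apply (hh : DifferentiableAt ℝ (fderiv ℝ h) Y) (Z W : E) :
    ⟪fderiv ℝ (gradient h) Y Z, W⟫ = fderiv ℝ (fderiv ℝ h) Y Z W := by
  rw [(hasFDerivAt_gradient hh).fderiv]
  exact toDual_symm_apply

theorem inner_fderiv_gradient_comm (hh : ContDiffAt ℝ 2 h Y) (Z W : E) :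
    ⟪fderiv ℝ (gradient h) Y Z, W⟫ = ⟪fderiv ℝ (gradient h) Y W, Z⟫ := by
  have hd : DifferentiableAt ℝ (fderiv ℝ h) Y :=
    (hh.fderiv_right (m := 1) (by norm_num)).differentiableAt one_ne_zero
  rw [inner_fderiv_gradient_apply hd, inner_fderiv_gradient_apply hd]
  exact hh.isSymmSndFDerivAt (by simp) Z W

end Gradient

theorem inner_fderiv_apply_add_inner_eq_zero {E F : Type*} [NormedAddCommGroup E]
    [InnerProductSpace ℝ E] [NormedAddCommGroup F] [NormedSpace ℝ F] {f : F → E} {Y : F}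
    (hf : DifferentiableAt ℝ f Y) (A : F →L[ℝ] E) (h0 : ∀ y, ⟪f y, A y⟫ = 0) (Z : F) :
    ⟪fderiv ℝ f Y Z, A Y⟫ + ⟪f Y, A Z⟫ = 0 := by
  have hderiv := fderiv_inner_apply ℝ hf A.differentiableAt Z
  rw [funext h0, fderiv_const_apply, A.fderiv] at hderiv
  rw [add_comm]
  exact hderiv.symm

theorem hessian_bracket_eq_bracket_gradient_of_adInvariant_general
    {E : Type*} [NormedAddCommGroup E] [InnerProductSpace ℝ E] [FiniteDimensional ℝ E]
    (l : E →ₗ[ℝ] E →ₗ[ℝ] E)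
    (hinv : ∀ X Y Z : E, ⟪l X Y, Z⟫ + ⟪Y, l X Z⟫ = 0)
    (h : E → ℝ) (hh : ContDiff ℝ 2 h)
    (hAd : ∀ X Y : E, ⟪gradient h Y, l X Y⟫ = 0) :
    ∀ X Y : E, fderiv ℝ (gradient h) Y (l X Y) = l X (gradient h Y) := by
  intro X Y
  have hgrad : DifferentiableAt ℝ (gradient h) Y :=
    (hasFDerivAt_gradient ((hh.fderiv_right (m := 1) (by norm_num)).differentiable
      one_ne_zero Y)).differentiableAt
  refine ext_inner_right ℝ fun Z => ?_
  calc ⟪fderiv ℝ (gradient h) Y (l X Y), Z⟫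
      = ⟪fderiv ℝ (gradient h) Y Z, l X Y⟫ := inner_fderiv_gradient_comm hh.contDiffAt _ _
    _ = -⟪gradient h Y, l X Z⟫ := eq_neg_of_add_eq_zero_left
        (inner_fderiv_apply_add_inner_eq_zero hgrad (l X).toContinuousLinearMap (hAd X) Z)
    _ = ⟪l X (gradient h Y), Z⟫ := (eq_neg_of_add_eq_zero_left (hinv X _ Z)).symm

/-- **`ad_{u(Y)} = H(Y) ∘ ad_Y` for an Ad-invariant complexifier.**
Let `𝔨` be a finite-dimensional real Lie algebra (with bilinear antisymmetric bracket `l`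
satisfying the Jacobi identity) carrying an invariant inner product, and let `h : 𝔨 → ℝ`
be a `C²`, infinitesimally Ad-invariant function with gradient `grad h` and Hessian
`H(Y) = D(grad h)(Y)`. Then `H(Y)(⁅X,Y⁆) = ⁅X, grad h(Y)⁆` for all `X, Y`. -/
theorem hessian_bracket_eq_bracket_gradient_of_adInvariant
    {E : Type*} [NormedAddCommGroup E] [InnerProductSpace ℝ E] [FiniteDimensional ℝ E]
    (l : E →ₗ[ℝ] E →ₗ[ℝ] E)
    (hanti : ∀ X Y : E, l X Y = -l Y X)
    (hjacobi : ∀ X Y Z : E, l X (l Y Z) = l (l X Y) Z + l Y (l X Z))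
    (hinv : ∀ X Y Z : E, ⟪l X Y, Z⟫ + ⟪Y, l X Z⟫ = 0)
    (h : E → ℝ) (hh : ContDiff ℝ 2 h)
    (hAd : ∀ X Y : E, ⟪gradient h Y, l X Y⟫ = 0) :
    ∀ X Y : E, fderiv ℝ (gradient h) Y (l X Y) = l X (gradient h Y) :=
  hessian_bracket_eq_bracket_gradient_of_adInvariant_general l hinv h hh hAd
end

section
/- Let E be a finite-dimensional real inner product space, h : E → ℝ a C² function whose Hessian H(Y) is positive definite at every point, and g : E → E a surjective linear isometry with h ∘ g = h. Then for every real constant τ₂, the density function D(Y) = exp(−2τ₂(⟪Y, grad h(Y)⟫ − h(Y))) · √(det H(Y)) is g-invariant: D(g(Y)) = D(Y) for every Y ∈ E. -/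
open RealInnerProductSpace

/-!
An isometry `g` preserving `h` commutes with its gradient: `grad h ∘ g = g ∘ grad h`.
Hence `⟪Y, grad h Y⟫ - h Y` is `g`-invariant, and differentiating the commutation relation shows
that the Hessian at `g Y` is the Hessian at `Y` conjugated by `g`, which has the same determinant.
-/

section Gradient

variable {E F : Type*} [NormedAddCommGroup E] [InnerProductSpace ℝ E] [CompleteSpace E]
  [NormedAddCommGroup F] [InnerProductSpace ℝ F] [CompleteSpace F]

theorem gradient_comp_linearIsometryEquiv (f : E → ℝ) (e : F ≃ₗᵢ[ℝ] E) (x : F) :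
    gradient (f ∘ e) x = e.symm (gradient f (e x)) := by
  refine ext_inner_right ℝ fun v => ?_
  rw [inner_gradient_left, e.symm.inner_map_eq_flip, e.symm_symm, inner_gradient_left,
    show f ∘ e = f ∘ e.toContinuousLinearEquiv from rfl,
    ContinuousLinearEquiv.comp_right_fderiv]
  rfl

theorem gradient_apply_map_of_comp_eq {f : E → ℝ} {e : E ≃ₗᵢ[ℝ] E} (hf : f ∘ e = f) (x : E) :
    gradient f (e x) = e (gradient f x) := by
  conv_rhs => rw [← hf, gradient_comp_linearIsometryEquiv, e.apply_symm_apply]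

end Gradient

section Conjugation

variable {𝕜 E : Type*} [NontriviallyNormedField 𝕜] [NormedAddCommGroup E] [NormedSpace 𝕜 E]

theorem fderiv_apply_map_of_comp_eq {φ : E → E} {e : E ≃L[𝕜] E} (hφ : φ ∘ e = e ∘ φ) (x : E) :
    fderiv 𝕜 φ (e x) = (e : E →L[𝕜] E) ∘L fderiv 𝕜 φ x ∘L (e.symm : E →L[𝕜] E) := by
  have hcomm : fderiv 𝕜 φ (e x) ∘L (e : E →L[𝕜] E) = (e : E →L[𝕜] E) ∘L fderiv 𝕜 φ x := by
    rw [← e.comp_right_fderiv, hφ, e.comp_fderiv]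
  ext v
  simpa using congrArg (fun L => L (e.symm v)) hcomm

theorem det_fderiv_apply_map_of_comp_eq {φ : E → E} {e : E ≃L[𝕜] E} (hφ : φ ∘ e = e ∘ φ)
    (x : E) :
    LinearMap.det (fderiv 𝕜 φ (e x) : E →ₗ[𝕜] E) = LinearMap.det (fderiv 𝕜 φ x : E →ₗ[𝕜] E) := by
  rw [fderiv_apply_map_of_comp_eq hφ x]
  exact LinearMap.det_conj _ e.toLinearEquiv

end Conjugation

theorem density_invariant_of_isometry_invariant_general
    {E : Type*} [NormedAddCommGroup E] [InnerProductSpace ℝ E] [FiniteDimensional ℝ E]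
    (h : E → ℝ)
    (g : E →ₗᵢ[ℝ] E)
    (hinv : ∀ Y : E, h (g Y) = h Y) (τ₂ : ℝ) :
    ∀ Y : E,
      Real.exp (-(2 * τ₂ * (⟪g Y, gradient h (g Y)⟫ - h (g Y)))) *
          Real.sqrt (LinearMap.det ((fderiv ℝ (gradient h) (g Y) : E →L[ℝ] E) : E →ₗ[ℝ] E)) =
        Real.exp (-(2 * τ₂ * (⟪Y, gradient h Y⟫ - h Y))) *
          Real.sqrt (LinearMap.det ((fderiv ℝ (gradient h) Y : E →L[ℝ] E) : E →ₗ[ℝ] E)) := by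
  intro Y
  let G : E ≃ₗᵢ[ℝ] E := g.toLinearIsometryEquiv rfl
  have hgrad : ∀ Z, gradient h (g Z) = g (gradient h Z) :=
    gradient_apply_map_of_comp_eq (e := G) (funext hinv)
  have hpotential : ⟪g Y, gradient h (g Y)⟫ = ⟪Y, gradient h Y⟫ := by
    rw [hgrad, g.inner_map_map]
  have hdet : LinearMap.det (fderiv ℝ (gradient h) (g Y) : E →ₗ[ℝ] E) =
      LinearMap.det (fderiv ℝ (gradient h) Y : E →ₗ[ℝ] E) :=
    det_fderiv_apply_map_of_comp_eq (e := G.toContinuousLinearEquiv) (φ := gradient h)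
      (funext hgrad) Y
  rw [hpotential, hinv, hdet]

/-- **Invariance of the density of the measure `dμ_τ`.**
Let `E` be a finite-dimensional real inner product space, `h : E → ℝ` a `C²` function whose
Hessian `H(Y)` (the derivative of `grad h` at `Y`) is positive definite at every point, and
`g : E → E` a surjective linear isometry with `h ∘ g = h`. Then for every real `τ₂`, the
density `D(Y) = exp(−2τ₂(⟪Y, grad h(Y)⟫ − h(Y))) · √(det H(Y))` satisfies
`D(g(Y)) = D(Y)` for all `Y`. -/
theorem density_invariant_of_isometry_invariant
    {E : Type*} [NormedAddCommGroup E] [InnerProductSpace ℝ E] [FiniteDimensional ℝ E]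
    (h : E → ℝ) (hh : ContDiff ℝ 2 h)
    (hpos : ∀ Y v : E, v ≠ 0 → 0 < ⟪v, fderiv ℝ (gradient h) Y v⟫)
    (g : E →ₗᵢ[ℝ] E) (hg : Function.Surjective g)
    (hinv : ∀ Y : E, h (g Y) = h Y) (τ₂ : ℝ) :
    ∀ Y : E,
      Real.exp (-(2 * τ₂ * (⟪g Y, gradient h (g Y)⟫ - h (g Y)))) *
          Real.sqrt (LinearMap.det ((fderiv ℝ (gradient h) (g Y) : E →L[ℝ] E) : E →ₗ[ℝ] E)) =
        Real.exp (-(2 * τ₂ * (⟪Y, gradient h Y⟫ - h Y))) *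
          Real.sqrt (LinearMap.det ((fderiv ℝ (gradient h) Y : E →L[ℝ] E) : E →ₗ[ℝ] E)) :=
  density_invariant_of_isometry_invariant_general h g hinv τ₂
end
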